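/- arXiv:2503.10499 — 2 statements merged into one kernel-verified Lean document; each statement's English description precedes it below -/
import Mathlib

section
/- Let α ∈ (0,1] and let m : (0,∞) → (0,∞) be a continuous function satisfying, for all s, t > 0, both m(s+t) ≤ m(s)·m(t) and m(s+t) ≥ α·m(s)·m(t). Then there exists a real constant c such that e^{c·t} ≤ m(t) ≤ α^{-1}·e^{c·t} for every t > 0. -/
/-- Fekete-type argument: if `m : (0,∞) → (0,∞)` is continuous with
`α·m(s)·m(t) ≤ m(s+t) ≤ m(s)·m(t)` for some `α ∈ (0,1]`, then there is `c ∈ ℝ` with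
`e^{c t} ≤ m(t) ≤ α⁻¹ e^{c t}` for all `t > 0`. -/
theorem stmt_3 (α : ℝ) (hα0 : 0 < α) (hα1 : α ≤ 1)
    (m : ℝ → ℝ) (hpos : ∀ t > 0, 0 < m t)
    (hcont : ContinuousOn m (Set.Ioi (0 : ℝ)))
    (hsub : ∀ s > 0, ∀ t > 0, m (s + t) ≤ m s * m t)
    (hsup : ∀ s > 0, ∀ t > 0, α * (m s * m t) ≤ m (s + t)) :
    ∃ c : ℝ, ∀ t > 0, Real.exp (c * t) ≤ m t ∧ m t ≤ α⁻¹ * Real.exp (c * t) := by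
  set f : ℝ → ℝ := fun t => Real.log (m t) with hf_def
  set L : ℝ := Real.log α with hL_def
  have hL0 : L ≤ 0 := Real.log_nonpos (le_of_lt hα0) hα1
  -- subadditivity of f
  have hfsub : ∀ s > 0, ∀ t > 0, f (s + t) ≤ f s + f t := by
    intro s hs t ht
    have := hsub s hs t ht
    calc f (s + t) ≤ Real.log (m s * m t) :=
          Real.log_le_log (hpos _ (add_pos hs ht)) this
      _ = f s + f t := Real.log_mul (ne_of_gt (hpos s hs)) (ne_of_gt (hpos t ht))
  -- superadditivity with L
  have hfsup : ∀ s > 0, ∀ t > 0, f s + f t + L ≤ f (s + t) := by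
    intro s hs t ht
    have h := hsup s hs t ht
    have h1 : Real.log (α * (m s * m t)) ≤ f (s + t) :=
      Real.log_le_log (mul_pos hα0 (mul_pos (hpos s hs) (hpos t ht))) h
    have h2 : Real.log (α * (m s * m t)) = L + (f s + f t) := by
      rw [Real.log_mul (ne_of_gt hα0) (ne_of_gt (mul_pos (hpos s hs) (hpos t ht))),
        Real.log_mul (ne_of_gt (hpos s hs)) (ne_of_gt (hpos t ht))]
    linarith [h1, h2.symm.le]
  -- iterated subadditivity
  have hA : ∀ n : ℕ, ∀ t > 0, f (((n : ℝ) + 1) * t) ≤ ((n : ℝ) + 1) * f t := by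
    intro n
    induction n with
    | zero => intro t ht; simp
    | succ k ih =>
      intro t ht
      have hkt : ((k : ℝ) + 1) * t > 0 := by positivity
      have h1 : f (((k : ℝ) + 1) * t + t) ≤ f (((k : ℝ) + 1) * t) + f t :=
        hfsub _ hkt t ht
      have h2 := ih t ht
      have heq : ((k : ℝ) + 1 + 1) * t = ((k : ℝ) + 1) * t + t := by ring
      push_cast
      rw [heq]
      linarith
  -- iterated superadditivity
  have hB : ∀ n : ℕ, ∀ t > 0, ((n : ℝ) + 1) * (f t + L) ≤ f (((n : ℝ) + 1) * t) + L := by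
    intro n
    induction n with
    | zero => intro t ht; simp
    | succ k ih =>
      intro t ht
      have hkt : ((k : ℝ) + 1) * t > 0 := by positivity
      have h1 : f (((k : ℝ) + 1) * t) + f t + L ≤ f (((k : ℝ) + 1) * t + t) :=
        hfsup _ hkt t ht
      have h2 := ih t ht
      have heq : ((k : ℝ) + 1 + 1) * t = ((k : ℝ) + 1) * t + t := by ring
      push_cast
      rw [heq]
      linarith
  -- rational relation
  have hrat : ∀ p q : ℕ, ∀ s > 0, ∀ t > 0,
      ((q : ℝ) + 1) * s = ((p : ℝ) + 1) * t →
      ((q : ℝ) + 1) * (f s + L) ≤ ((p : ℝ) + 1) * f t := by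
    intro p q s hs t ht h
    have h1 := hB q s hs
    have h2 := hA p t ht
    have h3 : f (((q : ℝ) + 1) * s) + L ≤ f (((p : ℝ) + 1) * t) := by
      rw [h]; linarith
    linarith
  -- continuity of f on Ioi 0
  have hfc : ContinuousOn f (Set.Ioi (0 : ℝ)) := by
    apply ContinuousOn.log hcont
    intro x hx
    exact ne_of_gt (hpos x hx)
  -- key inequality by density/continuity
  have hkey : ∀ s > 0, ∀ t > 0, t * (f s + L) ≤ s * f t := by
    intro s hs t ht
    set P : ℕ → ℕ := fun n => ⌈((n : ℝ) + 1) * s / t⌉₊ with hP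
    set S : ℕ → ℝ := fun n => ((P n : ℝ) * t) / ((n : ℝ) + 1) with hS
    have hSval : ∀ n : ℕ, S n = ((P n : ℝ) * t) / ((n : ℝ) + 1) := fun n => rfl
    have hx : ∀ n : ℕ, (0 : ℝ) < ((n : ℝ) + 1) * s / t := by
      intro n; positivity
    have hPge : ∀ n : ℕ, ((n : ℝ) + 1) * s / t ≤ (P n : ℝ) := fun n => Nat.le_ceil _
    have hPle : ∀ n : ℕ, (P n : ℝ) < ((n : ℝ) + 1) * s / t + 1 :=
      fun n => Nat.ceil_lt_add_one (le_of_lt (hx n))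
    have hn1 : ∀ n : ℕ, (0 : ℝ) < (n : ℝ) + 1 := by intro n; positivity
    have hSlb : ∀ n : ℕ, s ≤ S n := by
      intro n
      have h1 : ((n : ℝ) + 1) * s ≤ (P n : ℝ) * t := by
        have := (div_le_iff₀ ht).mp (hPge n)
        linarith
      rw [hSval n, le_div_iff₀ (hn1 n)]
      linarith
    have hSub : ∀ n : ℕ, S n ≤ s + t / ((n : ℝ) + 1) := by
      intro n
      have h3 : ((P n : ℝ)) * t < (((n : ℝ) + 1) * s / t + 1) * t :=
        mul_lt_mul_of_pos_right (hPle n) ht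
      have h4 : (((n : ℝ) + 1) * s / t + 1) * t = ((n : ℝ) + 1) * s + t := by
        field_simp
      rw [hSval n, div_le_iff₀ (hn1 n)]
      have h5 : (s + t / ((n : ℝ) + 1)) * ((n : ℝ) + 1) = ((n : ℝ) + 1) * s + t := by
        field_simp
      linarith
    have hSpos : ∀ n : ℕ, 0 < S n := fun n => lt_of_lt_of_le hs (hSlb n)
    -- each S n satisfies the discrete inequality
    have hdisc : ∀ n : ℕ, t * (f (S n) + L) ≤ S n * f t := by
      intro n
      have hcancel : S n * ((n : ℝ) + 1) = (P n : ℝ) * t := by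
        rw [hSval n]; field_simp
      have hP1 : 1 ≤ P n := Nat.one_le_ceil_iff.mpr (hx n)
      obtain ⟨p', hp'⟩ : ∃ p', P n = p' + 1 := ⟨P n - 1, (Nat.succ_pred_eq_of_pos hP1).symm⟩
      have hrel' : ((n : ℝ) + 1) * S n = ((p' : ℝ) + 1) * t := by
        rw [mul_comm, hcancel, hp']; push_cast; ring
      have hmain := hrat p' n (S n) (hSpos n) t ht hrel'
      have key2 : t * (((n : ℝ) + 1) * (f (S n) + L)) ≤ t * (((p' : ℝ) + 1) * f t) :=
        mul_le_mul_of_nonneg_left hmain ht.le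
      have e : t * (((p' : ℝ) + 1) * f t) = (S n * f t) * ((n : ℝ) + 1) := by
        have : t * ((p' : ℝ) + 1) = S n * ((n : ℝ) + 1) := by
          rw [hcancel, hp']; push_cast; ring
        linear_combination f t * this
      have key3 : (t * (f (S n) + L)) * ((n : ℝ) + 1) ≤ (S n * f t) * ((n : ℝ) + 1) := by
        calc (t * (f (S n) + L)) * ((n : ℝ) + 1)
            = t * (((n : ℝ) + 1) * (f (S n) + L)) := by ring
          _ ≤ t * (((p' : ℝ) + 1) * f t) := key2
          _ = (S n * f t) * ((n : ℝ) + 1) := e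
      exact le_of_mul_le_mul_right key3 (hn1 n)
    -- S n → s
    have hT : Filter.Tendsto S Filter.atTop (nhds s) := by
      have h1 : Filter.Tendsto (fun n : ℕ => s + t / ((n : ℝ) + 1)) Filter.atTop (nhds s) := by
        have h0 : Filter.Tendsto (fun n : ℕ => t / ((n : ℝ) + 1)) Filter.atTop (nhds 0) := by
          apply Filter.Tendsto.div_atTop (tendsto_const_nhds)
          exact Filter.tendsto_atTop_add_const_right _ _ tendsto_natCast_atTop_atTop
        simpa using (tendsto_const_nhds.add h0)
      exact tendsto_of_tendsto_of_tendsto_of_le_of_le tendsto_const_nhds h1 hSlb hSub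
    have htendIoi : Filter.Tendsto S Filter.atTop (nhdsWithin s (Set.Ioi 0)) := by
      apply tendsto_nhdsWithin_of_tendsto_nhds_of_eventually_within _ hT
      exact Filter.Eventually.of_forall hSpos
    have hfS : Filter.Tendsto (fun n => f (S n)) Filter.atTop (nhds (f s)) :=
      ((hfc s hs).tendsto).comp htendIoi
    have hLHS : Filter.Tendsto (fun n => t * (f (S n) + L)) Filter.atTop
        (nhds (t * (f s + L))) :=
      tendsto_const_nhds.mul (hfS.add tendsto_const_nhds)
    have hRHS : Filter.Tendsto (fun n => S n * f t) Filter.atTop (nhds (s * f t)) :=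
      hT.mul tendsto_const_nhds
    exact le_of_tendsto_of_tendsto' hLHS hRHS hdisc
  -- define c as sup of (f s + L)/s
  set G : Set ℝ := (fun s => (f s + L) / s) '' Set.Ioi 0 with hG
  have hGne : G.Nonempty := ⟨(f 1 + L) / 1, ⟨1, Set.mem_Ioi.mpr one_pos, rfl⟩⟩
  have hGbdd : BddAbove G := by
    refine ⟨f 1, ?_⟩
    rintro x ⟨s, hs, rfl⟩
    have hs' : (0:ℝ) < s := hs
    have := hkey s hs' 1 one_pos
    rw [div_le_iff₀ hs']
    nlinarith [this]
  set c : ℝ := sSup G with hc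
  refine ⟨c, fun t ht => ?_⟩
  have hub : c ≤ f t / t := by
    apply csSup_le hGne
    rintro x ⟨s, hs, rfl⟩
    have hs' : (0:ℝ) < s := hs
    rw [div_le_div_iff₀ hs' ht]
    have := hkey s hs' t ht
    nlinarith [this]
  have hlb : (f t + L) / t ≤ c := le_csSup hGbdd ⟨t, ht, rfl⟩
  have h1 : c * t ≤ f t := by
    have := mul_le_mul_of_nonneg_right hub (le_of_lt ht)
    rwa [div_mul_cancel₀ _ (ne_of_gt ht)] at this
  have h2 : f t + L ≤ c * t := by
    have := mul_le_mul_of_nonneg_right hlb (le_of_lt ht)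
    rwa [div_mul_cancel₀ _ (ne_of_gt ht)] at this
  have hm : Real.exp (f t) = m t := Real.exp_log (hpos t ht)
  constructor
  · calc Real.exp (c * t) ≤ Real.exp (f t) := Real.exp_le_exp.mpr h1
      _ = m t := hm
  · rw [← hm]
    calc Real.exp (f t) ≤ Real.exp (c * t - L) := Real.exp_le_exp.mpr (by linarith)
      _ = Real.exp (c * t) * Real.exp (-L) := by rw [← Real.exp_add]; ring_nf
      _ = α⁻¹ * Real.exp (c * t) := by
          rw [hL_def, Real.exp_neg, Real.exp_log hα0]; ring
end

section
/- Let δ > 0, c > 0 and K ≥ 1, and let g : ℕ → ℝ be a nonnegative sequence satisfying, for every integer k ≥ 1, g(k) ≤ (1 + exp(-c·2^{k-1}·δ))·K²·exp(c·2^k·δ)·g(k-1). Then there exists a constant C > 0 (depending only on g(0), c, δ and K) such that for every integer k ≥ 1, g(k) ≤ C·(2^k·δ)^{2·log₂ K}·exp(2c·2^k·δ). -/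
/-!
Unfolding the recursion bounds `g k` by `g 0` times a product of `k` factors. The correction
factors `1 + exp (-c δ 2^j)` have a product bounded by `exp (∑ exp (-c δ) ^ j)`, a convergent
geometric series; the factors `exp (c δ 2^(j+1))` multiply to `exp (c δ (2^(k+1) - 2))`; and
`K^(2k) = (2^k)^(2 log₂ K)` is the polynomial factor in the time `t = 2^k δ`.
-/

open Finset Real

theorem le_mul_prod_range_of_succ_le {R : Type*} [CommSemiring R] [PartialOrder R]
    [IsOrderedRing R] {g a : ℕ → R} (ha : ∀ j, 0 ≤ a j) (h : ∀ j, g (j + 1) ≤ a j * g j)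
    (k : ℕ) : g k ≤ g 0 * ∏ j ∈ range k, a j := by
  induction k with
  | zero => simp
  | succ k ih =>
    calc g (k + 1) ≤ a k * g k := h k
      _ ≤ a k * (g 0 * ∏ j ∈ range k, a j) := mul_le_mul_of_nonneg_left ih (ha k)
      _ = g 0 * ∏ j ∈ range (k + 1), a j := by rw [prod_range_succ]; ring

theorem sum_range_exp_neg_mul_two_pow_le {a : ℝ} (ha : 0 < a) (k : ℕ) :
    ∑ j ∈ range k, exp (-a * 2 ^ j) ≤ 1 / (1 - exp (-a)) := by
  have hterm (j : ℕ) : exp (-a * 2 ^ j) ≤ exp (-a) ^ j := by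
    rw [← exp_nat_mul, exp_le_exp]
    have : (j : ℝ) ≤ 2 ^ j := by exact_mod_cast (Nat.lt_two_pow_self).le
    nlinarith
  calc ∑ j ∈ range k, exp (-a * 2 ^ j) ≤ ∑ j ∈ Ico 0 k, exp (-a) ^ j := by
        rw [← range_eq_Ico]; exact sum_le_sum fun j _ => hterm j
    _ ≤ exp (-a) ^ 0 / (1 - exp (-a)) :=
        geom_sum_Ico_le_of_lt_one (exp_pos _).le (exp_lt_one_iff.2 (neg_lt_zero.2 ha))
    _ = 1 / (1 - exp (-a)) := by rw [pow_zero]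

theorem prod_range_one_add_exp_neg_mul_two_pow_le {a : ℝ} (ha : 0 < a) (k : ℕ) :
    ∏ j ∈ range k, (1 + exp (-a * 2 ^ j)) ≤ exp (1 / (1 - exp (-a))) :=
  (prod_one_add_le_exp_sum _ fun _ => (exp_pos _).le).trans
    (exp_le_exp.2 (sum_range_exp_neg_mul_two_pow_le ha k))

theorem sum_range_two_pow_succ_le (k : ℕ) : ∑ j ∈ range k, (2 : ℝ) ^ (j + 1) ≤ 2 * 2 ^ k := by
  have hsum : ∑ j ∈ range k, (2 : ℝ) ^ (j + 1) = 2 * 2 ^ k - 2 := by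
    induction k with
    | zero => simp
    | succ k ih => rw [sum_range_succ, ih]; ring
  linarith

theorem pow_two_mul_eq_rpow_logb_div {K δ : ℝ} (hK : 0 < K) (hδ : 0 < δ) (k : ℕ) :
    K ^ (2 * k) = (2 ^ k * δ) ^ (2 * logb 2 K) / δ ^ (2 * logb 2 K) := by
  have hexponent : (k : ℝ) * (2 * logb 2 K) = logb 2 K * (2 * k : ℕ) := by push_cast; ring
  rw [mul_rpow (by positivity) hδ.le, mul_div_cancel_right₀ _ (rpow_pos_of_pos hδ _).ne',
    ← rpow_natCast 2 k, ← rpow_mul zero_le_two, hexponent, rpow_mul zero_le_two,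
    rpow_logb zero_lt_two one_lt_two.ne' hK, rpow_natCast]

theorem le_mul_pow_mul_exp_of_dyadic_recursion {a K : ℝ} {g : ℕ → ℝ} (ha : 0 < a)
    (hg0 : 0 ≤ g 0)
    (hrec : ∀ j, g (j + 1) ≤ (1 + exp (-a * 2 ^ j)) * K ^ 2 * exp (a * 2 ^ (j + 1)) * g j)
    (k : ℕ) :
    g k ≤ g 0 * exp (1 / (1 - exp (-a))) * K ^ (2 * k) * exp (2 * a * 2 ^ k) := by
  have hexp : a * ∑ j ∈ range k, (2 : ℝ) ^ (j + 1) ≤ 2 * a * 2 ^ k := by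
    nlinarith [sum_range_two_pow_succ_le k]
  calc g k ≤ g 0 * ∏ j ∈ range k, (1 + exp (-a * 2 ^ j)) * K ^ 2 * exp (a * 2 ^ (j + 1)) :=
        le_mul_prod_range_of_succ_le (fun j => by positivity) hrec k
    _ = g 0 * ((∏ j ∈ range k, (1 + exp (-a * 2 ^ j))) * K ^ (2 * k) *
          exp (a * ∑ j ∈ range k, (2 : ℝ) ^ (j + 1))) := by
        rw [prod_mul_distrib, prod_mul_distrib, prod_const, card_range, ← pow_mul, mul_sum,
          exp_sum]
    _ ≤ g 0 * (exp (1 / (1 - exp (-a))) * K ^ (2 * k) * exp (2 * a * 2 ^ k)) := by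
        have hK2k : 0 ≤ K ^ (2 * k) := (even_two_mul k).pow_nonneg K
        gcongr g 0 * (?_ * _ * exp ?_)
        exact prod_range_one_add_exp_neg_mul_two_pow_le ha k
    _ = g 0 * exp (1 / (1 - exp (-a))) * K ^ (2 * k) * exp (2 * a * 2 ^ k) := by ring

/-- Dyadic iteration for the second-moment bound: if a nonnegative sequence `g` satisfies
`g(k) ≤ (1 + e^{-c·2^{k-1}·δ})·K²·e^{c·2^k·δ}·g(k-1)` for all `k ≥ 1`, then
`g(k) ≤ C·(2^k δ)^{2 log₂ K}·e^{2c·2^k δ}` for some constant `C > 0`. -/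
theorem stmt_5 (δ c K : ℝ) (hδ : 0 < δ) (hc : 0 < c) (hK : 1 ≤ K)
    (g : ℕ → ℝ) (hg : ∀ k, 0 ≤ g k)
    (hrec : ∀ k : ℕ, 1 ≤ k →
      g k ≤ (1 + Real.exp (-c * 2 ^ (k - 1) * δ)) * K ^ 2 * Real.exp (c * 2 ^ k * δ) * g (k - 1)) :
    ∃ C : ℝ, 0 < C ∧ ∀ k : ℕ, 1 ≤ k →
      g k ≤ C * ((2 : ℝ) ^ k * δ) ^ (2 * Real.logb 2 K) * Real.exp (2 * c * 2 ^ k * δ) := by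
  have hrec' (j : ℕ) : g (j + 1) ≤
      (1 + exp (-(c * δ) * 2 ^ j)) * K ^ 2 * exp (c * δ * 2 ^ (j + 1)) * g j := by
    have h := hrec (j + 1) j.succ_pos
    rw [Nat.add_sub_cancel] at h
    convert h using 4 <;> ring_nf
  have hbound (k : ℕ) := le_mul_pow_mul_exp_of_dyadic_recursion (mul_pos hc hδ) (hg 0) hrec' k
  simp only [pow_two_mul_eq_rpow_logb_div (one_pos.trans_le hK) hδ] at hbound
  set L := logb 2 K
  set M := exp (1 / (1 - exp (-(c * δ))))
  refine ⟨(g 0 + 1) * M / δ ^ (2 * L), by have := hg 0; positivity, fun k _ => ?_⟩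
  calc g k ≤ g 0 * M / δ ^ (2 * L) * (2 ^ k * δ) ^ (2 * L) * exp (2 * c * 2 ^ k * δ) := by
        convert hbound k using 1; ring_nf
    _ ≤ (g 0 + 1) * M / δ ^ (2 * L) * (2 ^ k * δ) ^ (2 * L) * exp (2 * c * 2 ^ k * δ) := by
        gcongr; linarith
end
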